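/- arXiv:2601.10881 — 5 statements merged into one kernel-verified Lean document; each statement's English description precedes it below -/
import Mathlib

section
/- Let K be an odd positive integer and let G be a K-edge-connected finite simple graph. Then G has no crossing K-cuts; that is, for any two vertex subsets X and Y with ∅ ≠ X ≠ V(G), ∅ ≠ Y ≠ V(G), |∂X| = K and |∂Y| = K, at least one of the four sets X∩Y, X∩(V∖Y), (V∖X)∩Y, (V∖X)∩(V∖Y) is empty. In other words, the family of K-cuts of G is laminar. -/
/-!
Write `e(S, T)` for the number of edges between `S` and `T`. For disjoint `S`, `T` one has
`|∂(S ∪ T)| + 2 e(S, T) = |∂S| + |∂T|`. If `∂X` and `∂Y` cross, the corners `X ∩ Y` and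
`Xᶜ ∩ Y` are disjoint, nonempty, have union `Y` and each have at least `K` cut edges, so
`K + 2 e(X ∩ Y, Xᶜ ∩ Y) ≥ 2K`; as `K` is odd, `2 e(X ∩ Y, Xᶜ ∩ Y) ≥ K + 1`, and likewise
for the corners in `Yᶜ`. Both kinds of edges cross `∂X`, which therefore has more than `K` edges.
-/

open SimpleGraph

variable {V : Type*}

/-- The cut `∂X`: the set of edges of `G` with exactly one endpoint in `X`. -/
def cutEdges (G : SimpleGraph V) (X : Set V) : Set (Sym2 V) :=
  {e | e ∈ G.edgeSet ∧ ∃ u v, e = s(u, v) ∧ u ∈ X ∧ v ∉ X}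

/-- `G` is `K`-edge-connected: at least two vertices, connected, and every cut has
at least `K` edges. -/
def KEdgeConnected (G : SimpleGraph V) (K : ℕ) : Prop :=
  Nontrivial V ∧ G.Connected ∧
    ∀ X : Set V, X.Nonempty → X ≠ Set.univ → K ≤ (cutEdges G X).ncard

/-- `∂X` is a `K`-cut. -/
def IsKCut (G : SimpleGraph V) (K : ℕ) (X : Set V) : Prop :=
  X.Nonempty ∧ X ≠ Set.univ ∧ (cutEdges G X).ncard = K

/-- The cuts `∂X` and `∂Y` cross. -/
def Crossing (X Y : Set V) : Prop :=
  (X ∩ Y).Nonempty ∧ (X ∩ Yᶜ).Nonempty ∧ (Xᶜ ∩ Y).Nonempty ∧ (Xᶜ ∩ Yᶜ).Nonempty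

/-- The set of vertices reachable from `u` in `T` after deleting the edge `e`;
for a spanning tree `T` and an edge `e` of `T` with endpoint `u`, this is the shore
of the cut induced by `e` containing `u`. -/
def treeSide (T : SimpleGraph V) (u : V) (e : Sym2 V) : Set V :=
  {x | (T.deleteEdges {e}).Reachable u x}

/-- The congestion of the edge `(u,v)` of a spanning tree `T` of `G`. -/
noncomputable def edgeCong (G T : SimpleGraph V) (u v : V) : ℕ :=
  (cutEdges G (treeSide T u s(u, v))).ncard

/-- The spanning tree `T` of `G` has congestion at most `K`. -/
def CongAtMost (G T : SimpleGraph V) (K : ℕ) : Prop :=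
  ∀ u v, T.Adj u v → edgeCong G T u v ≤ K

/-- The congestion of a spanning tree `T` of `G`. -/
noncomputable def treeCongestion (G T : SimpleGraph V) : ℕ :=
  sSup {n | ∃ u v, T.Adj u v ∧ n = edgeCong G T u v}

/-- The spanning-tree congestion of `G`. -/
noncomputable def stc (G : SimpleGraph V) : ℕ :=
  sInf {n | ∃ T : SimpleGraph V, T ≤ G ∧ T.IsTree ∧ treeCongestion G T = n}

/-- `T_out(w,e)`: the vertex set of the component of the tree `H − e` not containing `w`
(the vertices of `H` that are no longer reachable from `w` after deleting `e`). -/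
def treeOut (G : SimpleGraph V) (H : G.Subgraph) (w : V) (e : Sym2 V) : Set V :=
  {x ∈ H.verts | ¬ (H.deleteEdges {e}).spanningCoe.Reachable w x}

/-- The rooted tree `(H, w)` is safe (with parameter `K`). -/
def SafeTree (G : SimpleGraph V) (K : ℕ) (H : G.Subgraph) (w : V) : Prop :=
  ∀ e ∈ H.edgeSet, (cutEdges G (treeOut G H w e)).ncard = K

/-- `V(∂X)`: the set of endpoints of edges of the cut `∂X`. -/
def cutVerts (G : SimpleGraph V) (X : Set V) : Set V :=
  {v | ∃ e ∈ cutEdges G X, v ∈ e}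

/-- `w` is a hub for `Z`: `w ∈ V(∂Z)` and there is a spanning tree `H` of the subgraph
of `G` induced by `Z ∪ {w}` such that `(H, w)` is a safe tree. -/
def IsHub (G : SimpleGraph V) (K : ℕ) (Z : Set V) (w : V) : Prop :=
  w ∈ cutVerts G Z ∧
    ∃ H : G.Subgraph, H.verts = Z ∪ {w} ∧ H.coe.IsTree ∧ SafeTree G K H w

/-- `H̃(Z)`: the set of all hubs for `Z`. -/
def hubSet (G : SimpleGraph V) (K : ℕ) (Z : Set V) : Set V :=
  {w | IsHub G K Z w}

/-- `N(S)`: the set of vertices adjacent in `G` to some vertex of `S`. -/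
def nbrSet (G : SimpleGraph V) (S : Set V) : Set V :=
  {v | ∃ u ∈ S, G.Adj u v}

/-- Edges of `∂X` with both endpoints in `S`. -/
def cutRestrict (G : SimpleGraph V) (X S : Set V) : Set (Sym2 V) :=
  {e ∈ cutEdges G X | ∀ v ∈ e, v ∈ S}

section EdgesBetween

open Set

variable (G : SimpleGraph V)

def edgesBetween (S T : Set V) : Set (Sym2 V) :=
  {e | e ∈ G.edgeSet ∧ ∃ u v, e = s(u, v) ∧ u ∈ S ∧ v ∈ T}

theorem cutEdges_eq_edgesBetween (X : Set V) : cutEdges G X = edgesBetween G X Xᶜ := rfl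

theorem edgesBetween_comm (S T : Set V) : edgesBetween G S T = edgesBetween G T S := by
  ext e
  constructor <;> rintro ⟨he, u, v, rfl, hu, hv⟩ <;> exact ⟨he, v, u, Sym2.eq_swap, hv, hu⟩

theorem cutEdges_compl (X : Set V) : cutEdges G Xᶜ = cutEdges G X := by
  rw [cutEdges_eq_edgesBetween, compl_compl, edgesBetween_comm, cutEdges_eq_edgesBetween]

theorem edgesBetween_mono {S S' T T' : Set V} (hS : S ⊆ S') (hT : T ⊆ T') :
    edgesBetween G S T ⊆ edgesBetween G S' T' := by
  rintro e ⟨he, u, v, rfl, hu, hv⟩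
  exact ⟨he, u, v, rfl, hS hu, hT hv⟩

theorem edgesBetween_union_right (S T U : Set V) :
    edgesBetween G S (T ∪ U) = edgesBetween G S T ∪ edgesBetween G S U := by
  ext e
  constructor
  · rintro ⟨he, u, v, rfl, hu, hv | hv⟩
    exacts [Or.inl ⟨he, u, v, rfl, hu, hv⟩, Or.inr ⟨he, u, v, rfl, hu, hv⟩]
  · rintro (⟨he, u, v, rfl, hu, hv⟩ | ⟨he, u, v, rfl, hu, hv⟩)
    exacts [⟨he, u, v, rfl, hu, Or.inl hv⟩, ⟨he, u, v, rfl, hu, Or.inr hv⟩]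

theorem edgesBetween_union_left (S T U : Set V) :
    edgesBetween G (S ∪ T) U = edgesBetween G S U ∪ edgesBetween G T U := by
  rw [edgesBetween_comm, edgesBetween_union_right, edgesBetween_comm G U,
    edgesBetween_comm G U]

theorem disjoint_edgesBetween {S T W : Set V} (h : Disjoint (S ∪ T) W) (U : Set V) :
    Disjoint (edgesBetween G S T) (edgesBetween G W U) := by
  rw [Set.disjoint_left]
  rintro e ⟨-, u, v, rfl, hu, hv⟩ ⟨-, w, x, hwx, hw, -⟩
  rcases Sym2.eq_iff.mp hwx with ⟨rfl, -⟩ | ⟨-, rfl⟩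
  · exact h.ne_of_mem (Or.inl hu) hw rfl
  · exact h.ne_of_mem (Or.inr hv) hw rfl

theorem ncard_cutEdges_union_add_two_mul {S T : Set V} (hST : Disjoint S T)
    (hS : (cutEdges G S).Finite) (hT : (cutEdges G T).Finite) :
    (cutEdges G (S ∪ T)).ncard + 2 * (edgesBetween G S T).ncard =
      (cutEdges G S).ncard + (cutEdges G T).ncard := by
  obtain ⟨U, hUdef⟩ : ∃ U, U = (S ∪ T)ᶜ := ⟨_, rfl⟩
  have hU : Disjoint (S ∪ T) U := hUdef ▸ disjoint_compl_right
  have hSc : Sᶜ = T ∪ U := by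
    rw [hUdef, compl_union, union_inter_distrib_left, union_compl_self, inter_univ,
      union_eq_right.mpr hST.subset_compl_left]
  have hTc : Tᶜ = S ∪ U := by
    rw [hUdef, compl_union, union_inter_distrib_left, union_compl_self, univ_inter,
      union_eq_right.mpr hST.symm.subset_compl_left]
  have hcutS : cutEdges G S = edgesBetween G S T ∪ edgesBetween G S U := by
    rw [cutEdges_eq_edgesBetween, hSc, edgesBetween_union_right]
  have hcutT : cutEdges G T = edgesBetween G S T ∪ edgesBetween G T U := by
    rw [cutEdges_eq_edgesBetween, hTc, edgesBetween_union_right, edgesBetween_comm G T S]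
  have hcutST : cutEdges G (S ∪ T) = edgesBetween G S U ∪ edgesBetween G T U := by
    rw [cutEdges_eq_edgesBetween, ← hUdef, edgesBetween_union_left]
  rw [hcutS] at hS ⊢
  rw [hcutT] at hT ⊢
  have hfinST : (edgesBetween G S T).Finite := hS.subset subset_union_left
  have hfinSU : (edgesBetween G S U).Finite := hS.subset subset_union_right
  have hfinTU : (edgesBetween G T U).Finite := hT.subset subset_union_right
  have hSU_TU : Disjoint (edgesBetween G S U) (edgesBetween G T U) := by
    rw [edgesBetween_comm G S U]
    exact disjoint_edgesBetween G
      (disjoint_union_left.mpr ⟨(hU.mono_left subset_union_right).symm, hST⟩) U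
  have hST_SU : Disjoint (edgesBetween G S T) (edgesBetween G S U) := by
    rw [edgesBetween_comm G S U]
    exact disjoint_edgesBetween G hU S
  have hST_TU : Disjoint (edgesBetween G S T) (edgesBetween G T U) := by
    rw [edgesBetween_comm G T U]
    exact disjoint_edgesBetween G hU T
  rw [hcutST, ncard_union_eq hSU_TU hfinSU hfinTU, ncard_union_eq hST_SU hfinST hfinSU,
    ncard_union_eq hST_TU hfinST hfinTU]
  ring

theorem ncard_edgesBetween_inter_add_le_ncard_cutEdges {X : Set V}
    (hX : (cutEdges G X).Finite) (Y : Set V) :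
    (edgesBetween G (X ∩ Y) (Xᶜ ∩ Y)).ncard + (edgesBetween G (X ∩ Yᶜ) (Xᶜ ∩ Yᶜ)).ncard ≤
      (cutEdges G X).ncard := by
  have hdisj : Disjoint (edgesBetween G (X ∩ Y) (Xᶜ ∩ Y))
      (edgesBetween G (X ∩ Yᶜ) (Xᶜ ∩ Yᶜ)) :=
    disjoint_edgesBetween G (disjoint_compl_right.mono
      (union_subset inter_subset_right inter_subset_right) inter_subset_right) _
  have hsub : edgesBetween G (X ∩ Y) (Xᶜ ∩ Y) ∪ edgesBetween G (X ∩ Yᶜ) (Xᶜ ∩ Yᶜ) ⊆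
      cutEdges G X :=
    union_subset (edgesBetween_mono G inter_subset_left inter_subset_left)
      (edgesBetween_mono G inter_subset_left inter_subset_left)
  rw [← ncard_union_eq hdisj (hX.subset (subset_union_left.trans hsub))
    (hX.subset (subset_union_right.trans hsub))]
  exact ncard_le_ncard hsub hX

end EdgesBetween

theorem KEdgeConnected.two_mul_le_ncard_cutEdges_union_add {G : SimpleGraph V} {K : ℕ}
    (hG : KEdgeConnected G K) (hK : 0 < K) {S T : Set V} (hST : Disjoint S T)
    (hS : S.Nonempty) (hT : T.Nonempty) :
    2 * K ≤ (cutEdges G (S ∪ T)).ncard + 2 * (edgesBetween G S T).ncard := by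
  have hKS : K ≤ (cutEdges G S).ncard :=
    hG.2.2 S hS (Set.nonempty_compl.mp (hT.mono hST.subset_compl_left))
  have hKT : K ≤ (cutEdges G T).ncard :=
    hG.2.2 T hT (Set.nonempty_compl.mp (hS.mono hST.symm.subset_compl_left))
  rw [ncard_cutEdges_union_add_two_mul G hST (Set.finite_of_ncard_pos (hK.trans_le hKS))
    (Set.finite_of_ncard_pos (hK.trans_le hKT))]
  omega

theorem odd_K_cuts_laminar_general {V : Type*} (K : ℕ) (hKpos : 0 < K) (hKodd : Odd K)
    (G : SimpleGraph V) (hG : KEdgeConnected G K)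
    (X Y : Set V) (hX : IsKCut G K X) (hY : IsKCut G K Y) :
    X ∩ Y = ∅ ∨ X ∩ Yᶜ = ∅ ∨ Xᶜ ∩ Y = ∅ ∨ Xᶜ ∩ Yᶜ = ∅ := by
  simp only [← Set.not_nonempty_iff_eq_empty, ← not_and_or]
  rintro ⟨hXY, hXY', hX'Y, hX'Y'⟩
  have corners_union (Z : Set V) : X ∩ Z ∪ Xᶜ ∩ Z = Z := by
    rw [← Set.union_inter_distrib_right, Set.union_compl_self, Set.univ_inter]
  have corners_disjoint (Z : Set V) : Disjoint (X ∩ Z) (Xᶜ ∩ Z) :=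
    disjoint_compl_right.mono Set.inter_subset_left Set.inter_subset_left
  have hin := hG.two_mul_le_ncard_cutEdges_union_add hKpos (corners_disjoint Y) hXY hX'Y
  have hout := hG.two_mul_le_ncard_cutEdges_union_add hKpos (corners_disjoint Yᶜ) hXY' hX'Y'
  rw [corners_union, hY.2.2] at hin
  rw [corners_union, cutEdges_compl, hY.2.2] at hout
  have hcross := ncard_edgesBetween_inter_add_le_ncard_cutEdges G
    (Set.finite_of_ncard_pos (hX.2.2 ▸ hKpos)) Y
  rw [hX.2.2] at hcross
  obtain ⟨m, rfl⟩ := hKodd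
  omega

/-- If `K` is odd and `G` is `K`-edge-connected, then `G` has no
crossing `K`-cuts: the family of `K`-cuts of `G` is laminar. -/
theorem odd_K_cuts_laminar {V : Type*} [Fintype V] (K : ℕ) (hKpos : 0 < K) (hKodd : Odd K)
    (G : SimpleGraph V) (hG : KEdgeConnected G K)
    (X Y : Set V) (hX : IsKCut G K X) (hY : IsKCut G K Y) :
    X ∩ Y = ∅ ∨ X ∩ Yᶜ = ∅ ∨ Xᶜ ∩ Y = ∅ ∨ Xᶜ ∩ Yᶜ = ∅ :=
  odd_K_cuts_laminar_general K hKpos hKodd G hG X Y hX hY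
end

section
/- Let G be a K-edge-connected finite simple graph and let T̃ be a spanning tree of G with congestion at most K. Let w be a vertex of G and let Z_1, ..., Z_d be pairwise disjoint nonempty vertex sets whose union is V(G)∖{w}, such that each ∂Z_i is a K-cut of G, and such that for every K-cut ∂Y of G there exists an index j with Y ⊆ Z_j or V(G)∖Y ⊆ Z_j. Then every edge of T̃ that belongs to some ∂Z_i is incident to w; that is, T̃ ∩ (∂Z_1 ∪ ... ∪ ∂Z_d) ⊆ E_w, where E_w is the set of edges of G incident to w. -/
open SimpleGraph

variable {V : Type*}

/-! If a tree edge `uv` with `u, v ≠ w` lay in some `∂Z_i`, take the tree edge at `u` or `v` that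
points towards `w`: the shore of its fundamental cut away from `w` contains both `u` and `v`. Its
congestion is at most `K`, and `G` is `K`-edge-connected, so this shore is a `K`-cut; as it
misses `w`, the hypothesis on `K`-cuts puts it inside a single `Z_j`. Hence `u` and `v` lie in the
same block of the partition, and `uv` belongs to no `∂Z_i`. -/

namespace SimpleGraph

variable {V : Type*} {T : SimpleGraph V}

lemma Reachable.deleteEdges_or {u v a b : V} (h : T.Reachable a b)
    (ha : (T.deleteEdges {s(u, v)}).Reachable u a ∨ (T.deleteEdges {s(u, v)}).Reachable v a) :
    (T.deleteEdges {s(u, v)}).Reachable u b ∨ (T.deleteEdges {s(u, v)}).Reachable v b := by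
  obtain ⟨p⟩ := h
  induction p with
  | nil => exact ha
  | @cons a c b hac p ih =>
    apply ih
    by_cases he : s(a, c) = s(u, v)
    · rcases Sym2.eq_iff.mp he with ⟨-, rfl⟩ | ⟨-, rfl⟩
      · exact Or.inr .rfl
      · exact Or.inl .rfl
    · have hac' : (T.deleteEdges {s(u, v)}).Adj a c := by
        rw [deleteEdges_adj]; exact ⟨hac, he⟩
      exact ha.imp (·.trans hac'.reachable) (·.trans hac'.reachable)

lemma Connected.reachable_deleteEdges_or (hT : T.Connected) (u v x : V) :
    (T.deleteEdges {s(u, v)}).Reachable u x ∨ (T.deleteEdges {s(u, v)}).Reachable v x :=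
  (hT u x).deleteEdges_or (Or.inl .rfl)

lemma mem_treeSide_self (u : V) (e : Sym2 V) : u ∈ treeSide T u e := Reachable.rfl

lemma IsAcyclic.notMem_treeSide (hT : T.IsAcyclic) {u v : V} (h : T.Adj u v) :
    v ∉ treeSide T u s(u, v) :=
  isAcyclic_iff_forall_adj_isBridge.mp hT h

/-- The first edge `vp` of a path from `v` to `w` separates `w` from `v`, and from `u` as well
if `uv` is not on that path. -/
lemma IsAcyclic.exists_adj_mem_treeSide_notMem (hT : T.IsAcyclic) {u v w : V} (huv : T.Adj u v)
    (hvw : v ≠ w) (hreach : (T.deleteEdges {s(u, v)}).Reachable v w) :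
    ∃ p, T.Adj v p ∧ u ∈ treeSide T v s(v, p) ∧ w ∉ treeSide T v s(v, p) := by
  classical
  obtain ⟨q, hq⟩ := reachable_deleteEdges_iff_exists_walk.mp hreach
  cases hr : q.toPath with
  | mk r hr_path =>
  cases r with
  | nil => exact absurd rfl hvw
  | @cons _ p _ hvp t =>
    have hsub : s(v, p) :: t.edges ⊆ q.edges := by
      simpa [hr] using q.edges_toPath_subset_edges
    have hvp_t : s(v, p) ∉ t.edges := (List.nodup_cons.mp (by simpa using hr_path.edges_nodup)).1
    refine ⟨p, hvp, ?_, fun hw => hT.notMem_treeSide hvp ?_⟩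
    · have : (T.deleteEdges {s(v, p)}).Adj v u := by
        rw [deleteEdges_adj]
        refine ⟨huv.symm, fun he => hq ?_⟩
        rw [Sym2.eq_swap, Set.mem_singleton_iff.mp he]
        exact hsub (List.mem_cons_self ..)
      exact this.reachable
    · exact hw.trans (reachable_deleteEdges_iff_exists_walk.mpr ⟨t, hvp_t⟩).symm

lemma IsTree.exists_adj_treeSide (hT : T.IsTree) {u v w : V} (huv : T.Adj u v) (hu : u ≠ w)
    (hv : v ≠ w) : ∃ a b, T.Adj a b ∧ u ∈ treeSide T a s(a, b) ∧ v ∈ treeSide T a s(a, b) ∧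
      w ∉ treeSide T a s(a, b) := by
  rcases hT.connected.reachable_deleteEdges_or u v w with huw | hvw
  · rw [Sym2.eq_swap] at huw
    obtain ⟨p, hup, hv_mem, hw⟩ := hT.isAcyclic.exists_adj_mem_treeSide_notMem huv.symm hu huw
    exact ⟨u, p, hup, mem_treeSide_self u _, hv_mem, hw⟩
  · obtain ⟨p, hvp, hu_mem, hw⟩ := hT.isAcyclic.exists_adj_mem_treeSide_notMem huv hv hvw
    exact ⟨v, p, hvp, hu_mem, mem_treeSide_self v _, hw⟩

end SimpleGraph

section

variable {V : Type*}

lemma isKCut_treeSide {K : ℕ} {G T : SimpleGraph V} (hG : KEdgeConnected G K)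
    (hT : CongAtMost G T K) {a b x : V} (hab : T.Adj a b) (hx : x ∉ treeSide T a s(a, b)) :
    IsKCut G K (treeSide T a s(a, b)) := by
  have hne : (treeSide T a s(a, b)).Nonempty := ⟨a, mem_treeSide_self a _⟩
  have hnu : treeSide T a s(a, b) ≠ Set.univ := fun h => hx (h ▸ Set.mem_univ x)
  exact ⟨hne, hnu, le_antisymm (hT a b hab) (hG.2.2 _ hne hnu)⟩

lemma notMem_iUnion_cutEdges {ι : Type*} {G : SimpleGraph V} {Z : ι → Set V}
    (hZ : Pairwise (Function.onFun Disjoint Z)) {u v : V} {j : ι} (hu : u ∈ Z j) (hv : v ∈ Z j) :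
    s(u, v) ∉ ⋃ i, cutEdges G (Z i) := by
  rintro ⟨_, ⟨i, rfl⟩, -, a, b, he, ha, hb⟩
  have hab : a ∈ Z j ∧ b ∈ Z j := by
    rcases Sym2.eq_iff.mp he with ⟨rfl, rfl⟩ | ⟨rfl, rfl⟩ <;> simp [*]
  obtain rfl | hij := eq_or_ne i j
  · exact hb hab.2
  · exact Set.disjoint_left.mp (hZ hij) ha hab.1

end

theorem tree_edges_in_basic_cuts_incident_type1_general {V : Type*} (K : ℕ)
    (G : SimpleGraph V) (hG : KEdgeConnected G K)
    (T : SimpleGraph V) (hTtree : T.IsTree) (hTcong : CongAtMost G T K)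
    (w : V) (d : ℕ) (Z : Fin d → Set V)
    (hdisj : ∀ i j, i ≠ j → Disjoint (Z i) (Z j))
    (hunion : (⋃ i, Z i) = {w}ᶜ)
    (hlam : ∀ Y : Set V, IsKCut G K Y → ∃ j, Y ⊆ Z j ∨ Yᶜ ⊆ Z j) :
    ∀ u v : V, T.Adj u v → s(u, v) ∈ ⋃ i, cutEdges G (Z i) → u = w ∨ v = w := by
  intro u v huv hcut
  by_contra! huvw
  obtain ⟨a, b, hab, hu, hv, hw⟩ := hTtree.exists_adj_treeSide huv huvw.1 huvw.2
  obtain ⟨j, hj | hj⟩ := hlam _ (isKCut_treeSide hG hTcong hab hw)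
  · exact notMem_iUnion_cutEdges hdisj (hj hu) (hj hv) hcut
  · have hwZ : w ∈ ⋃ i, Z i := Set.mem_iUnion_of_mem j (hj hw)
    rw [hunion] at hwZ
    exact hwZ rfl

/-- (Lemma: basic `K`-cuts associated with a Type-1 node.) If
`Z_1, …, Z_d` partition `V ∖ {w}` into `K`-cuts such that every `K`-cut has a shore
inside some `Z_j`, then every edge of a congestion-`K` spanning tree `T̃` crossing
some `∂Z_i` is incident to `w`. -/
theorem tree_edges_in_basic_cuts_incident_type1 {V : Type*} [Fintype V] (K : ℕ)
    (G : SimpleGraph V) (hG : KEdgeConnected G K)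
    (T : SimpleGraph V) (hTle : T ≤ G) (hTtree : T.IsTree) (hTcong : CongAtMost G T K)
    (w : V) (d : ℕ) (Z : Fin d → Set V)
    (hdisj : ∀ i j, i ≠ j → Disjoint (Z i) (Z j))
    (hne : ∀ i, (Z i).Nonempty)
    (hunion : (⋃ i, Z i) = {w}ᶜ)
    (hcuts : ∀ i, IsKCut G K (Z i))
    (hlam : ∀ Y : Set V, IsKCut G K Y → ∃ j, Y ⊆ Z j ∨ Yᶜ ⊆ Z j) :
    ∀ u v : V, T.Adj u v → s(u, v) ∈ ⋃ i, cutEdges G (Z i) → u = w ∨ v = w :=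
  tree_edges_in_basic_cuts_incident_type1_general K G hG T hTtree hTcong w d Z hdisj hunion hlam
end

section
/- Let G be a finite simple graph, let (T, w) be a safe tree in G (with safety parameter K), let u be a vertex of T, and let e be the first edge on the path in T from u to w. Then (T_out(w,e), u), the component of T − e containing u rooted at u, is also a safe tree. -/
open SimpleGraph

variable {V : Type*}

/-! Write `S` for `T_out(w, e)` with `e = s(u, t)`. Deleting `e` from the tree leaves the
component of `w`, which contains `t`, and `S`, the component of `u`; hence `S` induces a subtree.
For an edge `f` inside `S`, every vertex outside `S` still reaches `w` in `T - f`, since its path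
to `w` in `T - e` avoids `S`; in particular so does `t`, hence `u`. So the part of `S` cut off
from `u` by `f` is exactly the part of `T` cut off from `w` by `f`, and the two cuts coincide. -/

namespace SimpleGraph

variable {A C D : SimpleGraph V} {u t v w x y : V}

theorem Walk.reachable_deleteEdges_cases (p : A.Walk x y) (c d : V) :
    (A.deleteEdges {s(c, d)}).Reachable x y ∨
      (A.deleteEdges {s(c, d)}).Reachable x c ∧ (A.deleteEdges {s(c, d)}).Reachable d y ∨
      (A.deleteEdges {s(c, d)}).Reachable x d ∧ (A.deleteEdges {s(c, d)}).Reachable c y := by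
  induction p with
  | nil => exact Or.inl .rfl
  | @cons x z y hxz q ih =>
    by_cases hcd : s(x, z) = s(c, d)
    · rcases Sym2.eq_iff.mp hcd with ⟨rfl, rfl⟩ | ⟨rfl, rfl⟩
      · rcases ih with h | ⟨h₁, h₂⟩ | ⟨-, h₂⟩
        · exact Or.inr (Or.inl ⟨.rfl, h⟩)
        · exact Or.inl (h₁.symm.trans h₂)
        · exact Or.inl h₂
      · rcases ih with h | ⟨-, h₂⟩ | ⟨h₁, h₂⟩
        · exact Or.inr (Or.inr ⟨.rfl, h⟩)
        · exact Or.inl h₂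
        · exact Or.inl (h₁.symm.trans h₂)
    · have hxz' : (A.deleteEdges {s(c, d)}).Adj x z := deleteEdges_adj.mpr ⟨hxz, hcd⟩
      rcases ih with h | ⟨h₁, h₂⟩ | ⟨h₁, h₂⟩
      · exact Or.inl (hxz'.reachable.trans h)
      · exact Or.inr (Or.inl ⟨hxz'.reachable.trans h₁, h₂⟩)
      · exact Or.inr (Or.inr ⟨hxz'.reachable.trans h₁, h₂⟩)

theorem Reachable.reachable_deleteEdges_of_not_reachable (h : A.Reachable w x)
    (hwx : ¬(A.deleteEdges {s(u, t)}).Reachable w x)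
    (hwu : ¬(A.deleteEdges {s(u, t)}).Reachable w u) :
    (A.deleteEdges {s(u, t)}).Reachable u x := by
  obtain ⟨p⟩ := h
  rcases p.reachable_deleteEdges_cases u t with h | ⟨h, -⟩ | ⟨-, h⟩
  exacts [absurd h hwx, absurd h hwu, h]

theorem Reachable.isBridge_of_not_reachable_deleteEdges (h : A.Reachable w u)
    (hwu : ¬(A.deleteEdges {s(u, t)}).Reachable w u) : A.IsBridge s(u, t) := by
  rw [isBridge_iff]
  intro hut
  obtain ⟨p⟩ := h
  rcases p.reachable_deleteEdges_cases u t with h | ⟨h, -⟩ | ⟨h, -⟩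
  exacts [hwu h, hwu h, hwu (h.trans hut.symm)]

theorem Reachable.deleteEdges_of_mem_of_not_reachable {f : Sym2 V} (h : A.Reachable w x)
    (hv : v ∈ f) (hwv : ¬A.Reachable w v) : (A.deleteEdges {f}).Reachable w x := by
  classical
  obtain ⟨p⟩ := h
  exact ⟨p.toDeleteEdge f fun hf ↦ hwv ⟨p.takeUntil v (p.mem_support_of_mem_edges hf hv)⟩⟩

theorem Reachable.mono_of_forall_adj (h : C.Reachable u x)
    (hCD : ∀ y z, C.Reachable u y → C.Adj y z → D.Adj y z) : D.Reachable u x := by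
  obtain ⟨p⟩ := h
  induction p with
  | nil => exact .rfl
  | @cons u z x huz q ih =>
    exact (hCD u z .rfl huz).reachable.trans
      (ih fun y y' hzy hyy' ↦ hCD y y' (huz.reachable.trans hzy) hyy')

theorem Subgraph.reachable_coe_of_reachable_spanningCoe {G : SimpleGraph V} {K : G.Subgraph}
    (hx : x ∈ K.verts) (hy : y ∈ K.verts) (h : K.spanningCoe.Reachable x y) :
    K.coe.Reachable ⟨x, hx⟩ ⟨y, hy⟩ := by
  obtain ⟨p⟩ := h
  induction p with
  | nil => exact .rfl
  | @cons x z y hxz q ih =>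
    have hz : z ∈ K.verts := K.edge_vert hxz.symm
    exact (show K.coe.Adj ⟨x, hx⟩ ⟨z, hz⟩ from hxz).reachable.trans (ih hz hy)

end SimpleGraph

section treeOut

variable {G C : SimpleGraph V} {H : G.Subgraph} {u t v w x : V} {e f : Sym2 V}

theorem mem_treeOut : x ∈ treeOut G H w f ↔
    x ∈ H.verts ∧ ¬(H.spanningCoe.deleteEdges {f}).Reachable w x := by
  rw [Subgraph.deleteEdges_spanningCoe_eq]; rfl

theorem mem_treeOut_iff_reachable (hconn : ∀ x ∈ H.verts, H.spanningCoe.Reachable w x)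
    (huS : u ∈ treeOut G H w s(u, t)) :
    x ∈ treeOut G H w s(u, t) ↔
      x ∈ H.verts ∧ (H.spanningCoe.deleteEdges {s(u, t)}).Reachable u x := by
  have hwu := (mem_treeOut.mp huS).2
  rw [mem_treeOut]
  refine and_congr_right fun hx ↦ ⟨fun hwx ↦ ?_, fun hux hwx ↦ hwu (hwx.trans hux.symm)⟩
  exact (hconn x hx).reachable_deleteEdges_of_not_reachable hwx hwu

theorem notMem_treeOut_of_mem (hconn : ∀ x ∈ H.verts, H.spanningCoe.Reachable w x)
    (huS : u ∈ treeOut G H w s(u, t)) : t ∉ treeOut G H w s(u, t) := fun htS ↦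
  ((hconn u (mem_treeOut.mp huS).1).isBridge_of_not_reachable_deleteEdges
    (mem_treeOut.mp huS).2) ((mem_treeOut_iff_reachable hconn huS).mp htS).2

theorem reachable_inf_induce_treeOut (hconn : ∀ x ∈ H.verts, H.spanningCoe.Reachable w x)
    (huS : u ∈ treeOut G H w s(u, t)) (hC : C ≤ H.spanningCoe.deleteEdges {s(u, t)})
    (h : C.Reachable u x) :
    ((H.induce (treeOut G H w s(u, t))).spanningCoe ⊓ C).Reachable u x := by
  refine h.mono_of_forall_adj fun y z huy hyz ↦ ⟨?_, hyz⟩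
  have hyz' : H.Adj y z := (hC hyz).1
  have huy' := huy.mono hC
  exact ⟨(mem_treeOut_iff_reachable hconn huS).mpr ⟨H.edge_vert hyz', huy'⟩,
    (mem_treeOut_iff_reachable hconn huS).mpr
      ⟨H.edge_vert hyz'.symm, huy'.trans (hC hyz).reachable⟩, hyz'⟩

theorem induce_treeOut_le : H.induce (treeOut G H w f) ≤ H :=
  ⟨fun _ hx ↦ hx.1, fun _ _ h ↦ h.2.2⟩

theorem connected_induce_treeOut (hconn : ∀ x ∈ H.verts, H.spanningCoe.Reachable w x)
    (huS : u ∈ treeOut G H w s(u, t)) : (H.induce (treeOut G H w s(u, t))).coe.Connected := by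
  have hu : ∀ x ∈ treeOut G H w s(u, t),
      (H.induce (treeOut G H w s(u, t))).spanningCoe.Reachable u x := fun x hx ↦
    (reachable_inf_induce_treeOut hconn huS le_rfl
      ((mem_treeOut_iff_reachable hconn huS).mp hx).2).mono inf_le_left
  exact (connected_iff_exists_forall_reachable _).mpr ⟨⟨u, huS⟩, fun x ↦
    Subgraph.reachable_coe_of_reachable_spanningCoe _ _ (hu x x.2)⟩

theorem reachable_deleteEdges_of_notMem_treeOut (hx : x ∈ H.verts) (hxS : x ∉ treeOut G H w e)
    (hv : v ∈ f) (hvS : v ∈ treeOut G H w e) :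
    (H.spanningCoe.deleteEdges {f}).Reachable w x := by
  have hwx : (H.spanningCoe.deleteEdges {e}).Reachable w x := by
    by_contra hwx
    exact hxS (mem_treeOut.mpr ⟨hx, hwx⟩)
  exact (hwx.deleteEdges_of_mem_of_not_reachable hv (mem_treeOut.mp hvS).2).mono
    (deleteEdges_mono (deleteEdges_le _))

theorem reachable_deleteEdges_induce_treeOut
    (hconn : ∀ x ∈ H.verts, H.spanningCoe.Reachable w x) (huS : u ∈ treeOut G H w s(u, t))
    (hxS : x ∈ treeOut G H w s(u, t))
    (hwx : (H.spanningCoe.deleteEdges {f}).Reachable w x) :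
    ((H.induce (treeOut G H w s(u, t))).spanningCoe.deleteEdges {f}).Reachable u x := by
  have hle : (H.spanningCoe.deleteEdges {f}).deleteEdges {s(u, t)} ≤
      H.spanningCoe.deleteEdges {s(u, t)} := deleteEdges_mono (deleteEdges_le _)
  have hux := hwx.reachable_deleteEdges_of_not_reachable
    (fun h ↦ (mem_treeOut.mp hxS).2 (h.mono hle)) (fun h ↦ (mem_treeOut.mp huS).2 (h.mono hle))
  refine (reachable_inf_induce_treeOut hconn huS hle hux).mono fun p q hpq ↦ ?_
  exact deleteEdges_adj.mpr ⟨hpq.1, (deleteEdges_adj.mp (deleteEdges_adj.mp hpq.2).1).2⟩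

theorem treeOut_induce_treeOut (hconn : ∀ x ∈ H.verts, H.spanningCoe.Reachable w x)
    (hut : H.Adj u t) (huS : u ∈ treeOut G H w s(u, t))
    (hf : f ∈ (H.induce (treeOut G H w s(u, t))).edgeSet) :
    treeOut G (H.induce (treeOut G H w s(u, t))) u f = treeOut G H w f := by
  set S := treeOut G H w s(u, t)
  induction f using Sym2.ind with | _ a b => ?_
  obtain ⟨haS, hbS, -⟩ : a ∈ S ∧ b ∈ S ∧ H.Adj a b := hf
  have htS := notMem_treeOut_of_mem hconn huS
  have hwu : (H.spanningCoe.deleteEdges {s(a, b)}).Reachable w u := by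
    refine (reachable_deleteEdges_of_notMem_treeOut (H.edge_vert hut.symm) htS
      (Sym2.mem_mk_left a b) haS).trans (deleteEdges_adj.mpr ⟨hut.symm, ?_⟩).reachable
    rintro h
    rcases Sym2.eq_iff.mp (Set.mem_singleton_iff.mp h) with ⟨rfl, -⟩ | ⟨rfl, -⟩
    exacts [htS haS, htS hbS]
  have hBA : (H.induce S).spanningCoe.deleteEdges {s(a, b)} ≤
      H.spanningCoe.deleteEdges {s(a, b)} :=
    deleteEdges_mono (Subgraph.spanningCoe_le_of_le induce_treeOut_le)
  ext x
  rw [mem_treeOut, mem_treeOut, Subgraph.induce_verts]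
  by_cases hxS : x ∈ S
  · exact ⟨fun ⟨_, hux⟩ ↦ ⟨(mem_treeOut.mp hxS).1,
        fun hwx ↦ hux (reachable_deleteEdges_induce_treeOut hconn huS hxS hwx)⟩,
      fun ⟨_, hwx⟩ ↦ ⟨hxS, fun hux ↦ hwx (hwu.trans (hux.mono hBA))⟩⟩
  · exact ⟨fun h ↦ absurd h.1 hxS, fun h ↦ absurd
      (reachable_deleteEdges_of_notMem_treeOut h.1 hxS (Sym2.mem_mk_left a b) haS) h.2⟩

end treeOut

theorem safe_subtree_general {V : Type*} (K : ℕ) (G : SimpleGraph V)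
    (H : G.Subgraph) (w : V) (htree : H.coe.IsTree) (hw : w ∈ H.verts)
    (hsafe : SafeTree G K H w)
    (u : V) (e : Sym2 V) (he : e ∈ H.edgeSet)
    (hue : u ∈ e) (huout : u ∈ treeOut G H w e) :
    (H.induce (treeOut G H w e)).coe.IsTree ∧
      SafeTree G K (H.induce (treeOut G H w e)) u := by
  obtain ⟨t, rfl⟩ := Sym2.mem_iff_exists.mp hue
  have hconn : ∀ x ∈ H.verts, H.spanningCoe.Reachable w x := fun x hx ↦
    (htree.connected.preconnected ⟨w, hw⟩ ⟨x, hx⟩).map ⟨Subtype.val, id⟩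
  refine ⟨⟨connected_induce_treeOut hconn huout, htree.isAcyclic.comap _
    (Subgraph.inclusion.injective induce_treeOut_le)⟩, fun f hf ↦ ?_⟩
  rw [treeOut_induce_treeOut hconn he huout hf]
  exact hsafe f (Subgraph.edgeSet_mono induce_treeOut_le hf)

/-- If `(T, w)` is a safe tree, `u` a vertex of `T` and `e` the first
edge on the path in `T` from `u` to `w` (i.e. `e` is an edge of `T` incident to `u`
whose removal separates `u` from `w`), then `(T_out(w,e), u)` is also a safe tree. -/
theorem safe_subtree {V : Type*} [Fintype V] (K : ℕ) (G : SimpleGraph V)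
    (H : G.Subgraph) (w : V) (htree : H.coe.IsTree) (hw : w ∈ H.verts)
    (hsafe : SafeTree G K H w)
    (u : V) (hu : u ∈ H.verts) (e : Sym2 V) (he : e ∈ H.edgeSet)
    (hue : u ∈ e) (huout : u ∈ treeOut G H w e) :
    (H.induce (treeOut G H w e)).coe.IsTree ∧
      SafeTree G K (H.induce (treeOut G H w e)) u :=
  safe_subtree_general K G H w htree hw hsafe u e he hue huout
end

section
/- Let G be a finite simple graph, let (T, v) be a rooted tree in G whose vertex set V(T) satisfies |∂(V(T))| = K, and let (u, v) be an edge of G with u ∉ V(T) (so (u,v) ∈ ∂(V(T))). Then (T ∪ {(u,v)}, u) is a safe tree if and only if (T, v) is a safe tree. -/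
open SimpleGraph

variable {V : Type*}

/-!
The new edge `uv` is pendant at the new root `u`. Cutting it leaves `V(T)` as the far side,
whose cut has `K` edges by assumption. Cutting an edge `e` of `T` keeps `u` attached to `v`, so
the far side of `e` seen from `u` in `T + uv` is the far side of `e` seen from `v` in `T`.
-/

namespace SimpleGraph

variable {A : SimpleGraph V} {u v x : V}

lemma Reachable.eq_of_forall_not_adj (hu : ∀ y, ¬A.Adj u y) (h : A.Reachable u x) : x = u := by
  obtain ⟨p⟩ := h
  cases p with
  | nil => rfl
  | cons hadj _ => exact absurd hadj (hu _)

lemma reachable_sup_edge_iff_of_forall_not_adj (hu : ∀ y, ¬A.Adj u y) :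
    (A ⊔ edge u v).Reachable u x ↔ x = u ∨ A.Reachable v x := by
  constructor
  · rw [reachable_iff_reflTransGen]
    intro h
    induction h with
    | refl => exact Or.inl rfl
    | @tail b c _ hbc ih =>
      rcases hbc with hbc | hbc
      · rcases ih with rfl | hvb
        · exact absurd hbc (hu c)
        · exact Or.inr (hvb.trans hbc.reachable)
      · obtain ⟨⟨rfl, rfl⟩ | ⟨rfl, rfl⟩, -⟩ := (edge_adj _ _ _ _).mp hbc
        · exact Or.inr (Reachable.refl _)
        · exact Or.inl rfl
  · have huv : (A ⊔ edge u v).Reachable u v := by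
      by_cases h : u = v
      · exact h ▸ Reachable.refl u
      · exact Adj.reachable (Or.inr ((edge_adj _ _ _ _).mpr ⟨Or.inl ⟨rfl, rfl⟩, h⟩))
    rintro (rfl | hvx)
    · exact Reachable.refl _
    · exact huv.trans (hvx.mono le_sup_left)

end SimpleGraph

namespace SimpleGraph.Subgraph

variable {G : SimpleGraph V} {H : G.Subgraph} {u v : V} (hadj : G.Adj u v)

lemma verts_sup_subgraphOfAdj (hv : v ∈ H.verts) :
    (H ⊔ G.subgraphOfAdj hadj).verts = insert u H.verts := by
  rw [verts_sup, subgraphOfAdj_verts, Set.union_comm, Set.insert_union, Set.singleton_union,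
    Set.insert_eq_of_mem hv]

lemma spanningCoe_deleteEdges_sup_subgraphOfAdj {e : Sym2 V} (he : e ≠ s(u, v)) :
    ((H ⊔ G.subgraphOfAdj hadj).deleteEdges {e}).spanningCoe =
      (H.deleteEdges {e}).spanningCoe ⊔ edge u v := by
  ext a b
  simp only [spanningCoe_adj, deleteEdges_adj, sup_adj, subgraphOfAdj_adj, Set.mem_singleton_iff,
    SimpleGraph.sup_adj, edge_adj]
  have huv := hadj.ne
  constructor
  · rintro ⟨hab | hab, hne⟩
    · exact Or.inl ⟨hab, hne⟩
    · grind
  · rintro (⟨hab, hne⟩ | ⟨⟨rfl, rfl⟩ | ⟨rfl, rfl⟩, -⟩)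
    · exact ⟨Or.inl hab, hne⟩
    · exact ⟨Or.inr rfl, he.symm⟩
    · exact ⟨Or.inr Sym2.eq_swap, by rw [Sym2.eq_swap]; exact he.symm⟩

lemma treeOut_sup_subgraphOfAdj_self (hu : u ∉ H.verts) (hv : v ∈ H.verts) :
    treeOut G (H ⊔ G.subgraphOfAdj hadj) u s(u, v) = H.verts := by
  have hiso : ∀ y, ¬((H ⊔ G.subgraphOfAdj hadj).deleteEdges {s(u, v)}).spanningCoe.Adj u y := by
    intro y hy
    rw [spanningCoe_adj, deleteEdges_adj, sup_adj, subgraphOfAdj_adj] at hy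
    obtain ⟨hH | hs, hne⟩ := hy
    · exact hu hH.fst_mem
    · exact hne hs.symm
  ext x
  simp only [treeOut, Set.mem_ofPred_eq, verts_sup_subgraphOfAdj hadj hv, Set.mem_insert_iff]
  constructor
  · rintro ⟨rfl | hx, hr⟩
    · exact absurd (Reachable.refl _) hr
    · exact hx
  · exact fun hx ↦ ⟨Or.inr hx, fun hr ↦ hu (hr.eq_of_forall_not_adj hiso ▸ hx)⟩

lemma treeOut_sup_subgraphOfAdj (hu : u ∉ H.verts) (hv : v ∈ H.verts) {e : Sym2 V}
    (he : e ∈ H.edgeSet) : treeOut G (H ⊔ G.subgraphOfAdj hadj) u e = treeOut G H v e := by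
  have hne : e ≠ s(u, v) := by
    rintro rfl
    exact hu (H.mem_edgeSet.mp he).fst_mem
  have hiso : ∀ y, ¬(H.deleteEdges {e}).spanningCoe.Adj u y :=
    fun _ hy ↦ hu ((deleteEdges_adj _ _ _).mp hy).1.fst_mem
  ext x
  simp only [treeOut, Set.mem_ofPred_eq, verts_sup_subgraphOfAdj hadj hv,
    spanningCoe_deleteEdges_sup_subgraphOfAdj hadj hne,
    reachable_sup_edge_iff_of_forall_not_adj hiso, Set.mem_insert_iff, not_or]
  constructor
  · rintro ⟨rfl | hx, hxu, hr⟩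
    · exact absurd rfl hxu
    · exact ⟨hx, hr⟩
  · exact fun ⟨hx, hr⟩ ↦ ⟨Or.inr hx, fun h ↦ hu (h ▸ hx), hr⟩

end SimpleGraph.Subgraph

theorem safe_extend_edge_general {V : Type*} (K : ℕ) (G : SimpleGraph V)
    (H : G.Subgraph) (u v : V) (hv : v ∈ H.verts)
    (hu : u ∉ H.verts) (hcut : (cutEdges G H.verts).ncard = K)
    (hadj : G.Adj u v) :
    SafeTree G K (H ⊔ G.subgraphOfAdj hadj) u ↔ SafeTree G K H v := by
  have hedges : (H ⊔ G.subgraphOfAdj hadj).edgeSet = insert s(u, v) H.edgeSet := by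
    rw [Subgraph.edgeSet_sup, edgeSet_subgraphOfAdj, Set.union_singleton]
  rw [SafeTree, hedges, Set.forall_mem_insert,
    Subgraph.treeOut_sup_subgraphOfAdj_self hadj hu hv, hcut, eq_self, true_and]
  exact forall₂_congr fun e he ↦ by rw [Subgraph.treeOut_sup_subgraphOfAdj hadj hu hv he]

/-- Let `(T, v)` be a rooted tree with `|∂(V(T))| = K` and let
`(u, v)` be an edge of `G` with `u ∉ V(T)`. Then `(T ∪ {(u,v)}, u)` is safe iff
`(T, v)` is safe. -/
theorem safe_extend_edge {V : Type*} [Fintype V] (K : ℕ) (G : SimpleGraph V)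
    (H : G.Subgraph) (u v : V) (htree : H.coe.IsTree) (hv : v ∈ H.verts)
    (hu : u ∉ H.verts) (hcut : (cutEdges G H.verts).ncard = K)
    (hadj : G.Adj u v) :
    SafeTree G K (H ⊔ G.subgraphOfAdj hadj) u ↔ SafeTree G K H v :=
  safe_extend_edge_general K G H u v hv hu hcut hadj
end

section
/- Let G be a K-edge-connected finite simple graph, let Z ⊆ V(G) be such that ∂Z is a K-cut, and let v ∈ Z and pairwise disjoint nonempty sets Z_1, ..., Z_t (each not containing v) be such that Z = {v} ∪ Z_1 ∪ ... ∪ Z_t, each ∂Z_i is a K-cut, v ∈ V(∂Z) and v ∈ V(∂Z_i) for all i = 1, ..., t, and such that every K-cut of G having a shore X with X ⊊ Z satisfies X ⊆ Z_i for some i. Then: if v ∈ H̃(Z_i) for all i = 1, ..., t, we have H̃(Z) = {v} ∪ (N(v) ∖ Z); and otherwise H̃(Z) = ∅. -/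
open SimpleGraph

variable {V : Type*}

/-!
Every edge `e` of a safe tree `(T, w)` for `Z` cuts off a shore `T_out(w, e) ⊆ Z` that is a
`K`-cut; by the hypothesis on `K`-cuts inside `Z`, such a shore is either all of `Z` or contained
in a single `Z_i`, and in the latter case it misses `v`.

For a hub `w ≠ v`, the edges on the tree path from `w` to `v` cut off `v`, hence all of `Z`. This
forces `w ∉ Z` to be a leaf hanging off `v`, and deleting it leaves a safe tree rooted at `v`.
In a safe tree for `Z` rooted at `v`, an edge avoiding `v` lies in the shore cut off by the first
edge of the path from `v` to it, and that shore lies in one `Z_i`. So the tree is the wedge at `v`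
of trees on the sets `Z_i ∪ {v}`; as the shore of an edge is the same in the wedge as in the piece
containing it, safe trees for `Z` at `v` correspond to families of safe trees for the `Z_i` at `v`.
Finally, adding a pendant edge `vw` to a safe tree for `Z` at `v` gives a safe tree at `w`, whose
new shore is `Z`.
-/
namespace SimpleGraph

variable {W : Type*} {G G' T : SimpleGraph V}

theorem Reachable.lift {G' : SimpleGraph W} (f : V → W)
    (hf : ∀ ⦃a b⦄, G.Adj a b → G'.Reachable (f a) (f b)) {x y : V} (h : G.Reachable x y) :
    G'.Reachable (f x) (f y) := by
  rw [reachable_iff_reflTransGen] at h ⊢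
  exact h.lift' f fun a b hab => (reachable_iff_reflTransGen _ _).1 (hf hab)

theorem Reachable.of_forall_exit_eq {S : Set V} {v : V}
    (hin : ∀ ⦃a b⦄, G.Adj a b → a ∈ S → b ∈ S → G'.Adj a b)
    (hexit : ∀ ⦃a b⦄, G.Adj a b → a ∈ S → b ∉ S → a = v)
    {x y : V} (hx : x ∈ S) (hy : y ∈ S) (h : G.Reachable x y) : G'.Reachable x y := by
  classical
  -- retract every vertex outside `S` onto `v`
  have key := h.lift (G' := G') (fun z => if z ∈ S then z else v) fun a b hab => by
    by_cases ha : a ∈ S <;> by_cases hb : b ∈ S <;> simp only [ha, hb, if_true, if_false]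
    · exact (hin hab ha hb).reachable
    · rw [hexit hab ha hb]
    · rw [hexit hab.symm hb ha]
    · rfl
  simpa only [hx, hy, if_true] using key

theorem reachable_eq_of_forall_not_adj {x y : V} (hx : ∀ z, ¬ G.Adj x z) (h : G.Reachable x y) :
    x = y := by
  obtain ⟨p⟩ := h
  cases p with
  | nil => rfl
  | cons hadj _ => exact absurd hadj (hx _)

theorem IsAcyclic.not_reachable_deleteEdges (hT : T.IsAcyclic) {a b : V} {p : T.Walk a b}
    (hp : p.IsPath) {e : Sym2 V} (he : e ∈ p.edges) : ¬ (T.deleteEdges {e}).Reachable a b := by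
  classical
  rintro ⟨q⟩
  have hq := (hT.subsingleton_path a b).elim ⟨_, q.toPath.2.mapLe (deleteEdges_le _)⟩ ⟨p, hp⟩
  rw [Subtype.mk.injEq] at hq
  rw [← hq, Walk.edges_mapLe_eq_edges] at he
  exact (edgeSet_deleteEdges _ ▸ q.toPath.1.edges_subset_edgeSet he).2 rfl

end SimpleGraph

namespace SimpleGraph.Subgraph

variable {G : SimpleGraph V} {H H' : G.Subgraph}

theorem reachable_coe_iff {x y : H.verts} :
    H.coe.Reachable x y ↔ H.spanningCoe.Reachable x y := by
  classical
  refine ⟨fun h => h.map ⟨Subtype.val, id⟩, fun h => ?_⟩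
  have key := h.lift (G' := H.coe) (fun z => if hz : z ∈ H.verts then ⟨z, hz⟩ else x)
    fun a b hab => by
      simp only [hab.fst_mem, hab.snd_mem, dif_pos]
      exact Adj.reachable (show H.Adj a b from hab)
  simpa only [x.2, y.2, dif_pos] using key

theorem isAcyclic_coe_iff : H.coe.IsAcyclic ↔ H.spanningCoe.IsAcyclic := by
  have hdel (a b : H.verts) :
      H.coe.deleteEdges {s(a, b)} = (H.deleteEdges {s(a.1, b.1)}).coe := by
    rw [deleteEdges_coe_eq, Set.image_singleton, Sym2.map_mk]
  simp only [isAcyclic_iff_forall_adj_isBridge, isBridge_iff]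
  constructor
  · intro h a b hab hr
    refine h (v := ⟨a, hab.fst_mem⟩) (w := ⟨b, hab.snd_mem⟩) hab ?_
    rw [hdel]
    exact reachable_coe_iff.2 (by simpa using hr)
  · rintro h ⟨a, ha⟩ ⟨b, hb⟩ hab hr
    rw [hdel] at hr
    exact h hab (by simpa using reachable_coe_iff.1 hr)

theorem isTree_coe_iff {w : V} (hw : w ∈ H.verts) :
    H.coe.IsTree ↔ H.spanningCoe.IsAcyclic ∧ ∀ x ∈ H.verts, H.spanningCoe.Reachable w x := by
  rw [isTree_iff, isAcyclic_coe_iff, and_comm]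
  refine and_congr_right fun _ => ⟨fun h x hx => reachable_coe_iff.1 (h ⟨w, hw⟩ ⟨x, hx⟩),
    fun h => (connected_iff_exists_forall_reachable _).2 ⟨⟨w, hw⟩, fun x => ?_⟩⟩
  exact reachable_coe_iff.2 (h x x.2)

theorem spanningCoe_deleteEdges_mono (h : H ≤ H') (s : Set (Sym2 V)) :
    (H.deleteEdges s).spanningCoe ≤ (H'.deleteEdges s).spanningCoe := by
  simpa only [← deleteEdges_spanningCoe_eq] using deleteEdges_mono (spanningCoe_le_of_le h)

variable {ι : Type*}

/-- The `insert v` makes the single vertex `v` the bouquet of the empty family. -/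
structure IsBouquet (H : G.Subgraph) (v : V) (F : ι → G.Subgraph) : Prop where
  verts_eq : H.verts = insert v (⋃ i, (F i).verts)
  adj_iff : ∀ x y, H.Adj x y ↔ ∃ i, (F i).Adj x y
  mem_verts : ∀ i, v ∈ (F i).verts
  inter_subset : ∀ i j, i ≠ j → (F i).verts ∩ (F j).verts ⊆ {v}

theorem exists_isBouquet (v : V) (F : ι → G.Subgraph) (hv : ∀ i, v ∈ (F i).verts)
    (hF : ∀ i j, i ≠ j → (F i).verts ∩ (F j).verts ⊆ {v}) : ∃ H : G.Subgraph, H.IsBouquet v F :=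
  ⟨G.singletonSubgraph v ⊔ ⨆ i, F i,
    { verts_eq := by simp [← Set.singleton_union]
      adj_iff := by simp
      mem_verts := hv
      inter_subset := hF }⟩

theorem isBouquet_pendant {v w : V} (hvw : G.Adj v w) (hv : v ∈ H'.verts) (hw : w ∉ H'.verts)
    (hverts : H.verts = insert w H'.verts)
    (hadj : ∀ x y, H.Adj x y ↔ H'.Adj x y ∨ s(v, w) = s(x, y)) :
    IsBouquet H v ![H', G.subgraphOfAdj hvw] where
  verts_eq := by
    ext x
    simp only [hverts, Set.mem_insert_iff, Set.mem_iUnion, Fin.exists_fin_two,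
      Matrix.cons_val_zero, Matrix.cons_val_one, subgraphOfAdj_verts, Set.mem_singleton_iff]
    constructor
    · rintro (rfl | hx) <;> tauto
    · rintro (rfl | hx | rfl | rfl) <;> tauto
  adj_iff x y := by simp [hadj, Fin.exists_fin_two]
  mem_verts := by simp [Fin.forall_fin_two, hv]
  inter_subset := by
    have key : H'.verts ∩ {v, w} ⊆ {v} := by
      rintro x ⟨hx, rfl | rfl⟩
      · rfl
      · exact absurd hx hw
    intro i j hij
    fin_cases i <;> fin_cases j
    exacts [absurd rfl hij, key, Set.inter_comm _ _ ▸ key, absurd rfl hij]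

namespace IsBouquet

variable {v : V} {F : ι → G.Subgraph}

theorem le (hB : IsBouquet H v F) (i : ι) : F i ≤ H :=
  ⟨hB.verts_eq ▸ (Set.subset_iUnion (fun j => (F j).verts) i).trans (Set.subset_insert _ _),
    fun _ _ h => (hB.adj_iff _ _).2 ⟨i, h⟩⟩

theorem eq_of_adj (hB : IsBouquet H v F) {i j : ι} {a b : V} (hab : (F j).Adj a b)
    (ha : a ∈ (F i).verts) (hb : b ∈ (F i).verts) : j = i := by
  by_contra hji
  have hav : a = v := hB.inter_subset j i hji ⟨hab.fst_mem, ha⟩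
  have hbv : b = v := hB.inter_subset j i hji ⟨hab.snd_mem, hb⟩
  exact hab.ne (hav.trans hbv.symm)

theorem reachable_deleteEdges (hB : IsBouquet H v F) {s : Set (Sym2 V)} {i : ι} {x y : V}
    (hx : x ∈ (F i).verts) (hy : y ∈ (F i).verts)
    (h : (H.deleteEdges s).spanningCoe.Reachable x y) :
    ((F i).deleteEdges s).spanningCoe.Reachable x y := by
  refine h.of_forall_exit_eq (S := (F i).verts) (v := v) (fun a b hab ha hb => ?_)
    (fun a b hab ha hb => ?_) hx hy
  · obtain ⟨j, hj⟩ := (hB.adj_iff a b).1 hab.1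
    exact ⟨hB.eq_of_adj hj ha hb ▸ hj, hab.2⟩
  · obtain ⟨j, hj⟩ := (hB.adj_iff a b).1 hab.1
    have hji : j ≠ i := by rintro rfl; exact hb hj.snd_mem
    exact hB.inter_subset j i hji ⟨hj.fst_mem, ha⟩

theorem isTree_iff (hB : IsBouquet H v F) : H.coe.IsTree ↔ ∀ i, (F i).coe.IsTree := by
  have hvH : v ∈ H.verts := hB.verts_eq ▸ Set.mem_insert _ _
  simp only [isTree_coe_iff hvH, isTree_coe_iff (hB.mem_verts _),
    isAcyclic_iff_forall_adj_isBridge, isBridge_iff, spanningCoe_adj, deleteEdges_spanningCoe_eq]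
  constructor
  · rintro ⟨hA, hR⟩ i
    refine ⟨fun a b hab hr => hA ((hB.le i).2 hab) ?_, fun x hx => ?_⟩
    · exact hr.mono (spanningCoe_deleteEdges_mono (hB.le i) _)
    · simpa using hB.reachable_deleteEdges (s := ∅) (hB.mem_verts i) hx
        (by simpa using hR x ((hB.le i).1 hx))
  · intro h
    refine ⟨fun a b hab hr => ?_, fun x hx => ?_⟩
    · obtain ⟨i, hi⟩ := (hB.adj_iff a b).1 hab
      exact (h i).1 hi (hB.reachable_deleteEdges hi.fst_mem hi.snd_mem hr)
    · rw [hB.verts_eq, Set.mem_insert_iff, Set.mem_iUnion] at hx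
      obtain rfl | ⟨i, hx⟩ := hx
      · rfl
      · exact ((h i).2 x hx).mono (spanningCoe_le_of_le (hB.le i))

theorem treeOut_eq (hB : IsBouquet H v F) (htree : ∀ i, (F i).coe.IsTree) {i : ι} {a b : V}
    (hab : (F i).Adj a b) : treeOut G H v s(a, b) = treeOut G (F i) v s(a, b) := by
  ext x
  constructor
  · rintro ⟨hxH, hnr⟩
    rw [hB.verts_eq, Set.mem_insert_iff, Set.mem_iUnion] at hxH
    obtain rfl | ⟨j, hxj⟩ := hxH
    · exact absurd (Reachable.refl _) hnr
    obtain rfl : j = i := by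
      by_contra hji
      have hFj : (F j).spanningCoe ≤ ((F j).deleteEdges {s(a, b)}).spanningCoe :=
        fun c d hcd => ⟨hcd, fun h => hji (hB.eq_of_adj
          (Subgraph.mem_edgeSet.1 (Set.mem_singleton_iff.1 h ▸ Subgraph.mem_edgeSet.2 hcd))
          hab.fst_mem hab.snd_mem)⟩
      exact hnr ((((isTree_coe_iff (hB.mem_verts j)).1 (htree j)).2 x hxj).mono
        (hFj.trans (spanningCoe_deleteEdges_mono (hB.le j) _)))
    exact ⟨hxj, fun hr => hnr (hr.mono (spanningCoe_deleteEdges_mono (hB.le _) _))⟩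
  · rintro ⟨hx, hnr⟩
    exact ⟨(hB.le i).1 hx, fun hr => hnr (hB.reachable_deleteEdges (hB.mem_verts i) hx hr)⟩

theorem safeTree_iff (hB : IsBouquet H v F) {K : ℕ} (htree : ∀ i, (F i).coe.IsTree) :
    SafeTree G K H v ↔ ∀ i, SafeTree G K (F i) v := by
  constructor
  · intro h i e he
    induction e with
    | h a b => rw [← hB.treeOut_eq htree he]; exact h _ ((hB.le i).2 he)
  · intro h e he
    induction e with
    | h a b =>
      obtain ⟨i, hi⟩ := (hB.adj_iff a b).1 he
      rw [hB.treeOut_eq htree hi]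
      exact h i _ hi

end IsBouquet

end SimpleGraph.Subgraph

section SafeTrees

variable {G : SimpleGraph V} {K : ℕ} {H : G.Subgraph} {Z : Set V} {v w : V}

theorem treeOut_subset (e : Sym2 V) : treeOut G H w e ⊆ H.verts \ {w} :=
  fun _ hx => ⟨hx.1, fun hxw => hx.2 (hxw ▸ Reachable.refl _)⟩

theorem treeOut_subset_of_verts_eq (hH : H.verts = Z ∪ {w}) (e : Sym2 V) :
    treeOut G H w e ⊆ Z :=
  fun _ hx => (hH ▸ (treeOut_subset e hx).1 : _ ∈ Z ∪ {w}).resolve_right (treeOut_subset e hx).2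

theorem treeOut_eq_of_adj {e : Sym2 V} {w' : V} (h : H.Adj w w') (he : s(w, w') ≠ e) :
    treeOut G H w e = treeOut G H w' e := by
  have hr : (H.deleteEdges {e}).spanningCoe.Reachable w w' :=
    Adj.reachable (show (H.deleteEdges {e}).Adj w w' from ⟨h, he⟩)
  ext x
  exact ⟨fun ⟨hx, hn⟩ => ⟨hx, fun hr' => hn (hr.trans hr')⟩,
    fun ⟨hx, hn⟩ => ⟨hx, fun hr' => hn (hr.symm.trans hr')⟩⟩

theorem mem_treeOut_of_mem_edges (hA : H.spanningCoe.IsAcyclic) {x : V} (hx : x ∈ H.verts)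
    {p : H.spanningCoe.Walk w x} (hp : p.IsPath) {e : Sym2 V} (he : e ∈ p.edges) :
    x ∈ treeOut G H w e :=
  ⟨hx, by rw [← Subgraph.deleteEdges_spanningCoe_eq]; exact hA.not_reachable_deleteEdges hp he⟩

theorem mem_treeOut_of_adj {x y : V} {e : Sym2 V} (hx : x ∈ treeOut G H w e) (hxy : H.Adj x y)
    (he : s(x, y) ≠ e) : y ∈ treeOut G H w e :=
  ⟨hxy.snd_mem, fun hr => hx.2 (hr.trans (Adj.reachable
    (show (H.deleteEdges {e}).Adj x y from ⟨hxy, he⟩).symm))⟩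

theorem notMem_treeOut_of_adj {x : V} {e : Sym2 V} (hx : H.Adj w x) (he : s(w, x) ≠ e) :
    x ∉ treeOut G H w e :=
  fun h => h.2 (Adj.reachable (show (H.deleteEdges {e}).Adj w x from ⟨hx, he⟩))

theorem SafeTree.isKCut_treeOut (hsafe : SafeTree G K H w) (hZ : Z ≠ Set.univ)
    (hH : H.verts = Z ∪ {w}) {e : Sym2 V} (he : e ∈ H.edgeSet) {x : V}
    (hx : x ∈ treeOut G H w e) : IsKCut G K (treeOut G H w e) :=
  ⟨⟨x, hx⟩, fun h => hZ (Set.univ_subset_iff.1 (h ▸ treeOut_subset_of_verts_eq hH e)),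
    hsafe e he⟩

theorem SafeTree.treeOut_eq (hsafe : SafeTree G K H w) (hZ : Z ≠ Set.univ)
    (hH : H.verts = Z ∪ {w}) (hv : ∀ X, IsKCut G K X → X ⊂ Z → v ∉ X) {e : Sym2 V}
    (he : e ∈ H.edgeSet) (hve : v ∈ treeOut G H w e) : treeOut G H w e = Z :=
  (treeOut_subset_of_verts_eq hH e).eq_or_ssubset.resolve_right
    fun hss => hv _ (hsafe.isKCut_treeOut hZ hH he hve) hss hve

theorem SafeTree.root_isPendant (hsafe : SafeTree G K H w) (hZ : Z ≠ Set.univ) (hvZ : v ∈ Z)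
    (hv : ∀ X, IsKCut G K X → X ⊂ Z → v ∉ X) (hH : H.verts = Z ∪ {w}) (htree : H.coe.IsTree)
    (hwv : w ≠ v) : w ∉ Z ∧ H.Adj w v ∧ ∀ z, H.Adj w z → z = v := by
  classical
  have hvH : v ∈ H.verts := hH ▸ Or.inl hvZ
  have hmemZ : ∀ x ∈ H.verts, x ≠ w → x ∈ Z := fun x hx hxw => by simpa [hH, hxw] using hx
  obtain ⟨hA, hR⟩ := (Subgraph.isTree_coe_iff (hH ▸ Or.inr rfl : w ∈ H.verts)).1 htree
  obtain ⟨p, hp⟩ := (hR v hvH).some.toPath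
  have hcut : ∀ e ∈ p.edges, treeOut G H w e = Z := fun e he =>
    hsafe.treeOut_eq hZ hH hv (p.edges_subset_edgeSet he) (mem_treeOut_of_mem_edges hA hvH hp he)
  obtain ⟨z, hwz, q, rfl⟩ := Walk.exists_eq_cons_of_ne hwv p
  have hZwz := hcut s(w, z) (by simp)
  have hwZ : w ∉ Z := fun h => (treeOut_subset _ (hZwz ▸ h)).2 rfl
  have hleaf : ∀ y, H.Adj w y → y = z := fun y hy => by
    by_contra hyz
    exact notMem_treeOut_of_adj hy (by simp [hyz, hy.ne.symm])
      (hZwz ▸ hmemZ y hy.snd_mem hy.ne.symm)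
  obtain rfl : z = v := by
    by_contra hzv
    obtain ⟨y, hzy, r, rfl⟩ := Walk.exists_eq_cons_of_ne hzv q
    have hyw : y ≠ w := by
      rintro rfl
      simp [Walk.cons_isPath_iff] at hp
    exact notMem_treeOut_of_adj hwz (by simp [hwz.ne, hyw.symm])
      ((hcut s(z, y) (by simp)) ▸ hmemZ z hwz.snd_mem hwz.ne.symm)
  exact ⟨hwZ, hwz, hleaf⟩

theorem SafeTree.induce_of_isPendant (hsafe : SafeTree G K H w) (hH : H.verts = Z ∪ {w})
    (hv : v ∈ Z) (hw : w ∉ Z) (hwv : H.Adj w v) (hleaf : ∀ z, H.Adj w z → z = v)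
    (htree : H.coe.IsTree) : (H.induce Z).coe.IsTree ∧ SafeTree G K (H.induce Z) v := by
  have hB := Subgraph.isBouquet_pendant (H := H) (H' := H.induce Z) hwv.adj_sub.symm hv hw
    (by rw [hH, Subgraph.induce_verts, Set.union_singleton]) fun x y => by
      rw [Subgraph.induce_adj, Sym2.eq_iff]
      refine ⟨fun hxy => ?_, ?_⟩
      · have hmem : ∀ z ∈ H.verts, z ≠ w → z ∈ Z := fun z hz hzw => by
          simpa [hH, hzw] using hz
        by_cases hxw : x = w
        · subst hxw; exact Or.inr (Or.inr ⟨(hleaf y hxy).symm, rfl⟩)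
        by_cases hyw : y = w
        · subst hyw; exact Or.inr (Or.inl ⟨(hleaf x hxy.symm).symm, rfl⟩)
        exact Or.inl ⟨hmem x hxy.fst_mem hxw, hmem y hxy.snd_mem hyw, hxy⟩
      · rintro (⟨-, -, hxy⟩ | ⟨rfl, rfl⟩ | ⟨rfl, rfl⟩)
        exacts [hxy, hwv.symm, hwv]
  have htrees := hB.isTree_iff.1 htree
  refine ⟨htrees 0, fun e he => ?_⟩
  induction e with
  | h a b =>
  have hab : (H.induce Z).Adj a b := Subgraph.mem_edgeSet.1 he
  have hwab : s(w, v) ≠ s(a, b) := by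
    rintro h
    obtain ⟨rfl, -⟩ | ⟨rfl, -⟩ := Sym2.eq_iff.1 h
    exacts [hw hab.1, hw hab.2.1]
  have hout : treeOut G H v s(a, b) = treeOut G (H.induce Z) v s(a, b) :=
    hB.treeOut_eq htrees (i := 0) hab
  rw [← hout, ← treeOut_eq_of_adj hwv hwab]
  exact hsafe _ hab.2.2

theorem SafeTree.sup_subgraphOfAdj (hsafe : SafeTree G K H v) (hvw : G.Adj v w)
    (hH : H.verts = Z) (hv : v ∈ Z) (hw : w ∉ Z) (hZ : (cutEdges G Z).ncard = K)
    (htree : H.coe.IsTree) :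
    (H ⊔ G.subgraphOfAdj hvw).coe.IsTree ∧ SafeTree G K (H ⊔ G.subgraphOfAdj hvw) w := by
  have hB := Subgraph.isBouquet_pendant (H := H ⊔ G.subgraphOfAdj hvw) hvw (hH ▸ hv) (hH ▸ hw)
    (by rw [Subgraph.verts_sup, subgraphOfAdj_verts, hH]; ext; simp [or_comm, hv])
    (fun _ _ => by rw [Subgraph.sup_adj, subgraphOfAdj_adj])
  have htrees : ∀ i, (![H, G.subgraphOfAdj hvw] i).coe.IsTree := by
    simpa [Fin.forall_fin_two, htree] using IsTree.coe_subgraphOfAdj hvw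
  refine ⟨hB.isTree_iff.2 htrees, fun e he => ?_⟩
  induction e with
  | h a b =>
  obtain hab | hab := Subgraph.sup_adj.1 he
  · have hwab : s(w, v) ≠ s(a, b) := by
      rintro h
      obtain ⟨rfl, -⟩ | ⟨rfl, -⟩ := Sym2.eq_iff.1 h
      exacts [hw (hH ▸ hab.fst_mem), hw (hH ▸ hab.snd_mem)]
    rw [treeOut_eq_of_adj (Subgraph.sup_adj.2 (Or.inr (by simp))) hwab,
      hB.treeOut_eq htrees (i := 0) hab]
    exact hsafe _ hab
  · rw [subgraphOfAdj_adj] at hab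
    have hout : treeOut G (H ⊔ G.subgraphOfAdj hvw) w s(v, w) = Z := by
      refine Set.Subset.antisymm (fun x hx => ?_) fun x hx => ⟨?_, fun hr => ?_⟩
      · obtain ⟨hxH, hxw⟩ := treeOut_subset _ hx
        rw [Subgraph.verts_sup, subgraphOfAdj_verts, hH] at hxH
        rcases hxH with hx | rfl | rfl
        exacts [hx, hv, absurd rfl hxw]
      · exact Or.inl (hH ▸ hx)
      · refine hw (reachable_eq_of_forall_not_adj (fun y hy => ?_) hr ▸ hx)
        obtain ⟨hwy | hwy, hne⟩ := hy
        · exact hw (hH ▸ hwy.fst_mem)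
        · rw [subgraphOfAdj_adj] at hwy
          exact hne hwy.symm
    rw [← hab, hout]
    exact hZ

end SafeTrees

section Hubs

variable {G : SimpleGraph V} {K : ℕ} {H : G.Subgraph} {Z : Set V} {v w : V}

theorem IsHub.pendant_of_ne (hw : IsHub G K Z w) (hZ : Z ≠ Set.univ) (hvZ : v ∈ Z)
    (hv : ∀ X, IsKCut G K X → X ⊂ Z → v ∉ X) (hvcut : v ∈ cutVerts G Z) (hwv : w ≠ v) :
    w ∉ Z ∧ G.Adj v w ∧ IsHub G K Z v := by
  obtain ⟨-, H, hH, htree, hsafe⟩ := hw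
  obtain ⟨hwZ, hwvH, hleaf⟩ := hsafe.root_isPendant hZ hvZ hv hH htree hwv
  obtain ⟨htree', hsafe'⟩ := hsafe.induce_of_isPendant hH hvZ hwZ hwvH hleaf htree
  exact ⟨hwZ, hwvH.adj_sub.symm, hvcut, H.induce Z, by simp [hvZ], htree', hsafe'⟩

variable {ι : Type*} {Zs : ι → Set V}

theorem SafeTree.exists_mem_of_adj (hsafe : SafeTree G K H v) (hZ : Z ≠ Set.univ) (hvZ : v ∈ Z)
    (hlam : ∀ X, IsKCut G K X → X ⊂ Z → ∃ i, X ⊆ Zs i) (hH : H.verts = Z ∪ {v})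
    (htree : H.coe.IsTree) {a b : V} (hab : H.Adj a b) (ha : a ≠ v) (hb : b ≠ v) :
    ∃ i, a ∈ Zs i ∧ b ∈ Zs i := by
  classical
  obtain ⟨hA, hR⟩ := (Subgraph.isTree_coe_iff (hH ▸ Or.inr rfl : v ∈ H.verts)).1 htree
  obtain ⟨p, hp⟩ := (hR a hab.fst_mem).some.toPath
  obtain ⟨z, hvz, q, rfl⟩ := Walk.exists_eq_cons_of_ne ha.symm p
  have haX : a ∈ treeOut G H v s(v, z) := mem_treeOut_of_mem_edges hA hab.fst_mem hp (by simp)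
  have hbX : b ∈ treeOut G H v s(v, z) := mem_treeOut_of_adj haX hab (by simp [ha, hb])
  have hXZ : treeOut G H v s(v, z) ⊂ Z :=
    (Set.ssubset_iff_of_subset (treeOut_subset_of_verts_eq hH _)).2
      ⟨v, hvZ, fun h => (treeOut_subset _ h).2 rfl⟩
  obtain ⟨i, hi⟩ := hlam _ (hsafe.isKCut_treeOut hZ hH hvz haX) hXZ
  exact ⟨i, hi haX, hi hbX⟩

theorem inter_union_singleton_subset (hdisj : ∀ i j, i ≠ j → Disjoint (Zs i) (Zs j)) (i j : ι)
    (hij : i ≠ j) : (Zs i ∪ {v}) ∩ (Zs j ∪ {v}) ⊆ {v} := by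
  rintro x ⟨hxi | hxi, hxj | hxj⟩
  exacts [absurd hxj (Set.disjoint_left.1 (hdisj i j hij) hxi), hxj, hxi, hxi]

theorem insert_iUnion_union_singleton (hunion : Z = {v} ∪ ⋃ i, Zs i) :
    insert v (⋃ i, (Zs i ∪ {v})) = Z := by
  ext x
  simp only [hunion, Set.mem_insert_iff, Set.mem_iUnion, Set.mem_union, Set.mem_singleton_iff]
  tauto

theorem IsHub.parts (hv : IsHub G K Z v) (hZ : Z ≠ Set.univ) (hvZ : v ∈ Z)
    (hdisj : ∀ i j, i ≠ j → Disjoint (Zs i) (Zs j)) (hunion : Z = {v} ∪ ⋃ i, Zs i)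
    (hvcuts : ∀ i, v ∈ cutVerts G (Zs i)) (hlam : ∀ X, IsKCut G K X → X ⊂ Z → ∃ i, X ⊆ Zs i)
    (i : ι) : IsHub G K (Zs i) v := by
  obtain ⟨-, H, hH, htree, hsafe⟩ := hv
  have hpart : ∀ x ∈ H.verts, x ≠ v → ∃ i, x ∈ Zs i := fun x hx hxv => by
    simpa [hH, hunion, hxv] using hx
  have hB : H.IsBouquet v fun i => H.induce (Zs i ∪ {v}) :=
    { verts_eq := by
        change H.verts = insert v (⋃ i, (Zs i ∪ {v}))
        rw [insert_iUnion_union_singleton hunion, hH, Set.union_singleton,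
          Set.insert_eq_of_mem hvZ]
      adj_iff := fun x y => by
        refine ⟨fun hxy => ?_, fun ⟨_, hxy⟩ => hxy.2.2⟩
        by_cases hxv : x = v
        · obtain ⟨i, hyi⟩ := hpart y hxy.snd_mem (hxv ▸ hxy.ne.symm)
          exact ⟨i, Or.inr hxv, Or.inl hyi, hxy⟩
        by_cases hyv : y = v
        · obtain ⟨i, hxi⟩ := hpart x hxy.fst_mem hxv
          exact ⟨i, Or.inl hxi, Or.inr hyv, hxy⟩
        obtain ⟨i, hxi, hyi⟩ := hsafe.exists_mem_of_adj hZ hvZ hlam hH htree hxy hxv hyv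
        exact ⟨i, Or.inl hxi, Or.inl hyi, hxy⟩
      mem_verts := fun _ => Or.inr rfl
      inter_subset := inter_union_singleton_subset hdisj }
  have htrees := hB.isTree_iff.1 htree
  exact ⟨hvcuts i, _, rfl, htrees i, (hB.safeTree_iff htrees).1 hsafe i⟩

theorem isHub_of_forall_isHub_parts (hZ : (cutEdges G Z).ncard = K) (hvZ : v ∈ Z)
    (hdisj : ∀ i j, i ≠ j → Disjoint (Zs i) (Zs j)) (hunion : Z = {v} ∪ ⋃ i, Zs i)
    (hvcut : v ∈ cutVerts G Z) (hparts : ∀ i, IsHub G K (Zs i) v) :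
    IsHub G K Z v ∧ ∀ w, G.Adj v w → w ∉ Z → IsHub G K Z w := by
  choose Hs hHs htrees hsafes using fun i => (hparts i).2
  obtain ⟨H, hB⟩ := Subgraph.exists_isBouquet v Hs (fun i => hHs i ▸ Or.inr rfl)
    fun i j hij => hHs i ▸ hHs j ▸ inter_union_singleton_subset hdisj i j hij
  have hH : H.verts = Z := by
    rw [hB.verts_eq, ← insert_iUnion_union_singleton hunion]
    simp only [hHs]
  have htree := hB.isTree_iff.2 htrees
  have hsafe := (hB.safeTree_iff htrees).2 hsafes
  refine ⟨⟨hvcut, H, by rw [hH, Set.union_singleton, Set.insert_eq_of_mem hvZ], htree, hsafe⟩,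
    fun w hvw hwZ => ?_⟩
  obtain ⟨htree', hsafe'⟩ := hsafe.sup_subgraphOfAdj hvw hH hvZ hwZ hZ htree
  refine ⟨⟨s(v, w), ⟨hvw, v, w, rfl, hvZ, hwZ⟩, Sym2.mem_mk_right _ _⟩, _, ?_, htree', hsafe'⟩
  rw [Subgraph.verts_sup, subgraphOfAdj_verts, hH, ← Set.union_singleton (a := v),
    ← Set.union_assoc, Set.union_singleton (a := v)]
  exact Set.insert_eq_of_mem (Or.inl hvZ)

end Hubs

theorem hubs_type1_general {V : Type*} (K : ℕ)
    (G : SimpleGraph V)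
    (Z : Set V) (hZ : IsKCut G K Z)
    (v : V) (hvZ : v ∈ Z) (t : ℕ) (Zs : Fin t → Set V)
    (hdisj : ∀ i j, i ≠ j → Disjoint (Zs i) (Zs j))
    (hvnot : ∀ i, v ∉ Zs i)
    (hunion : Z = {v} ∪ ⋃ i, Zs i)
    (hvcut : v ∈ cutVerts G Z)
    (hvcuts : ∀ i, v ∈ cutVerts G (Zs i))
    (hlam : ∀ X : Set V, IsKCut G K X → X ⊂ Z → ∃ i, X ⊆ Zs i) :
    ((∀ i, v ∈ hubSet G K (Zs i)) →
        hubSet G K Z = {v} ∪ (G.neighborSet v \ Z)) ∧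
    (¬ (∀ i, v ∈ hubSet G K (Zs i)) → hubSet G K Z = ∅) := by
  have hv : ∀ X, IsKCut G K X → X ⊂ Z → v ∉ X := fun X hX hXZ hvX =>
    let ⟨i, hi⟩ := hlam X hX hXZ
    hvnot i (hi hvX)
  have hub_ne (w : V) (hw : IsHub G K Z w) (hwv : w ≠ v) :=
    hw.pendant_of_ne hZ.2.1 hvZ hv hvcut hwv
  refine ⟨fun hparts => ?_, fun hparts => ?_⟩
  · obtain ⟨hubv, hubw⟩ := isHub_of_forall_isHub_parts hZ.2.2 hvZ hdisj hunion hvcut hparts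
    ext w
    refine ⟨fun hw => ?_, ?_⟩
    · by_cases hwv : w = v
      · exact Or.inl hwv
      · obtain ⟨hwZ, hvw, -⟩ := hub_ne w hw hwv
        exact Or.inr ⟨hvw, hwZ⟩
    · rintro (rfl | ⟨hvw, hwZ⟩)
      exacts [hubv, hubw w hvw hwZ]
  · refine Set.eq_empty_of_forall_notMem fun w hw => hparts ?_
    have hubv : IsHub G K Z v := by
      by_cases hwv : w = v
      · exact hwv ▸ hw
      · exact (hub_ne w hw hwv).2.2
    exact hubv.parts hZ.2.1 hvZ hdisj hunion hvcuts hlam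

/-- (Hub recurrence for Type-1 internal nodes.) -/
theorem hubs_type1 {V : Type*} [Fintype V] (K : ℕ)
    (G : SimpleGraph V) (hG : KEdgeConnected G K)
    (Z : Set V) (hZ : IsKCut G K Z)
    (v : V) (hvZ : v ∈ Z) (t : ℕ) (Zs : Fin t → Set V)
    (hdisj : ∀ i j, i ≠ j → Disjoint (Zs i) (Zs j))
    (hne : ∀ i, (Zs i).Nonempty)
    (hvnot : ∀ i, v ∉ Zs i)
    (hunion : Z = {v} ∪ ⋃ i, Zs i)
    (hcuts : ∀ i, IsKCut G K (Zs i))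
    (hvcut : v ∈ cutVerts G Z)
    (hvcuts : ∀ i, v ∈ cutVerts G (Zs i))
    (hlam : ∀ X : Set V, IsKCut G K X → X ⊂ Z → ∃ i, X ⊆ Zs i) :
    ((∀ i, v ∈ hubSet G K (Zs i)) →
        hubSet G K Z = {v} ∪ (G.neighborSet v \ Z)) ∧
    (¬ (∀ i, v ∈ hubSet G K (Zs i)) → hubSet G K Z = ∅) :=
  hubs_type1_general K G Z hZ v hvZ t Zs hdisj hvnot hunion hvcut hvcuts hlam
end
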